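/- Let E0 > 0, E ∈ ℂ² with ‖E‖ = E0, and ζ ∈ ℝ \ {0} with λ := (ζ + E0²/ζ)/2. Let Y(ζ) be the eigenvector matrix with columns (1, −iE*/ζ)ᵀ, (0, (E^⊥)*/E0)ᵀ, (−iE0/ζ, E*/E0)ᵀ, and Π₀(ζ) := diag(γ(ζ), 1, γ(ζ)) with γ(ζ) = 1 + E0²/ζ². Then Y(ζ)† = Π₀(ζ)·Y(ζ)⁻¹. -/

import Mathlib

/-!
The columns of `Y(ζ)` are pairwise orthogonal, with squared norms `γ, 1, γ` (this is where
`‖E‖ = E0` and the reality of `ζ` enter), so `Y(ζ)† Y(ζ) = Π₀(ζ)`, and hence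
`Y(ζ)⁻¹ = Π₀(ζ)⁻¹ Y(ζ)†`.
-/

open Matrix

theorem Matrix.eq_mul_inv_of_mul_eq {n α : Type*} [Fintype n] [DecidableEq n] [CommRing α]
    {A Y D : Matrix n n α} (hD : IsUnit D.det) (h : A * Y = D) : A = D * Y⁻¹ := by
  rw [inv_eq_left_inv (B := D⁻¹ * A) (by rw [Matrix.mul_assoc, h, nonsing_inv_mul D hD]),
    mul_nonsing_inv_cancel_left D A hD]

noncomputable def eigenvectorMatrix (E0 ζ : ℝ) (E : Fin 2 → ℂ) : Matrix (Fin 3) (Fin 3) ℂ :=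
  !![1, 0, -Complex.I*E0/ζ;
     -Complex.I*(starRingEnd ℂ (E 0))/ζ, (E 1)/E0, (starRingEnd ℂ (E 0))/E0;
     -Complex.I*(starRingEnd ℂ (E 1))/ζ, -(E 0)/E0, (starRingEnd ℂ (E 1))/E0]

theorem conj_mul_add_conj_mul_eq_sq {E : Fin 2 → ℂ} {E0 : ℝ} (hE : ‖E 0‖^2 + ‖E 1‖^2 = E0^2) :
    starRingEnd ℂ (E 0) * E 0 + starRingEnd ℂ (E 1) * E 1 = (E0 : ℂ)^2 := by
  simp only [mul_comm (starRingEnd ℂ _), Complex.mul_conj, Complex.normSq_eq_norm_sq]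
  exact_mod_cast hE

theorem conjTranspose_eigenvectorMatrix_mul_self {E0 : ℝ} (ζ : ℝ) {E : Fin 2 → ℂ}
    (hE0 : E0 ≠ 0) (hE : ‖E 0‖^2 + ‖E 1‖^2 = E0^2) :
    (eigenvectorMatrix E0 ζ E)ᴴ * eigenvectorMatrix E0 ζ E =
      diagonal ![1 + (E0 : ℂ)^2/(ζ : ℂ)^2, 1, 1 + (E0 : ℂ)^2/(ζ : ℂ)^2] := by
  have hnorm := conj_mul_add_conj_mul_eq_sq hE
  have hE0' : (E0 : ℂ) ≠ 0 := by exact_mod_cast hE0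
  ext i j
  fin_cases i <;> fin_cases j <;>
    simp [eigenvectorMatrix, mul_apply, Fin.sum_univ_three, Complex.conj_ofReal, map_div₀,
      Complex.conj_I] <;>
    grind [Complex.I_sq]

theorem one_add_sq_div_sq_ne_zero (a b : ℝ) : 1 + (a : ℂ)^2 / (b : ℂ)^2 ≠ 0 := by
  exact_mod_cast (by positivity : (0 : ℝ) < 1 + a^2 / b^2).ne'

theorem stmt11_general (E0 : ℝ) (hE0 : 0 < E0) (ζ : ℝ)
    (E : Fin 2 → ℂ) (hE : ‖E 0‖^2 + ‖E 1‖^2 = E0^2) :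
    let z : ℂ := (ζ : ℂ)
    let γ : ℂ := 1 + (E0 : ℂ)^2/z^2
    let Y : Matrix (Fin 3) (Fin 3) ℂ :=
      !![1, 0, -Complex.I*E0/z;
         -Complex.I*(starRingEnd ℂ (E 0))/z, (E 1)/E0, (starRingEnd ℂ (E 0))/E0;
         -Complex.I*(starRingEnd ℂ (E 1))/z, -(E 0)/E0, (starRingEnd ℂ (E 1))/E0]
    let Pi0 : Matrix (Fin 3) (Fin 3) ℂ := Matrix.diagonal ![γ, 1, γ]
    Yᴴ = Pi0 * Y⁻¹ := by
  intro z γ Y Pi0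
  have hγ : γ ≠ 0 := one_add_sq_div_sq_ne_zero E0 ζ
  refine Matrix.eq_mul_inv_of_mul_eq ?_ (conjTranspose_eigenvectorMatrix_mul_self ζ hE0.ne' hE)
  simp [Pi0, det_diagonal, Fin.prod_univ_three, hγ]

/-- For real ζ ≠ 0, the eigenvector matrix Y(ζ) satisfies Y(ζ)† = Π₀(ζ)·Y(ζ)⁻¹
with Π₀(ζ) = diag(γ, 1, γ), γ = 1 + E0²/ζ². -/
theorem stmt11 (E0 : ℝ) (hE0 : 0 < E0) (ζ : ℝ) (hζ : ζ ≠ 0)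
    (E : Fin 2 → ℂ) (hE : ‖E 0‖^2 + ‖E 1‖^2 = E0^2) :
    let z : ℂ := (ζ : ℂ)
    let γ : ℂ := 1 + (E0 : ℂ)^2/z^2
    let Y : Matrix (Fin 3) (Fin 3) ℂ :=
      !![1, 0, -Complex.I*E0/z;
         -Complex.I*(starRingEnd ℂ (E 0))/z, (E 1)/E0, (starRingEnd ℂ (E 0))/E0;
         -Complex.I*(starRingEnd ℂ (E 1))/z, -(E 0)/E0, (starRingEnd ℂ (E 1))/E0]
    let Pi0 : Matrix (Fin 3) (Fin 3) ℂ := Matrix.diagonal ![γ, 1, γ]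
    Yᴴ = Pi0 * Y⁻¹ :=
  stmt11_general E0 hE0 ζ E hE
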